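/- Let ρ: ℝ → ℝ be differentiable such that both ρ and its derivative ρ' are Lipschitz continuous with constant L_ρ > 0. Fix a scaling κ > 0, a hidden width n, and training inputs x_1, …, x_m ∈ ℝ^{n₀} with ‖x_j‖ ≤ 1 for every j. For parameters θ = (u, v) with u ∈ ℝ^{n×n₀} (rows u_1,…,u_n) and v ∈ ℝ^n, define the two-layer network Φ(x; θ) = κ ∑_{i=1}^n v_i ρ(u_i · x), and let J(θ) ∈ ℝ^{m×(n·n₀+n)} be the Jacobian matrix whose j-th row is the gradient ∇_θ Φ(x_j; θ) (with entries κ v_i ρ'(u_i·x_j) x_j with respect to u_i and κ ρ(u_i·x_j) with respect to v_i). Then for any two parameter vectors θ̄ = (ū, v̄) and θ̃ = (ũ, ṽ) with ‖v̄‖ ≤ L_v, one has ‖J(θ̄) − J(θ̃)‖ ≤ m κ (1 + L_v) L_ρ √2 · ‖θ̄ − θ̃‖, i.e. the Jacobian map θ ↦ J(θ) is Lipschitz with constant L_J = m κ (1 + L_v) L_ρ √2. -/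
import Mathlib


open Finset

/-- **Lipschitz continuity of the Jacobian of a two-layer network.**
The network is `Φ(x; (u,v)) = κ ∑ i, v i * ρ (⟪u i, x⟫)`.  The Jacobian
`J θ ∈ ℝ^{m × (n·n₀ + n)}` has, in its `j`-th row, the entries
`κ * v i * ρ'(u i ⬝ x j) * x j k` (derivative w.r.t. `u i k`) and
`κ * ρ (u i ⬝ x j)` (derivative w.r.t. `v i`).  Matrix and parameter
norms are the Euclidean (Frobenius) norms, written via square roots of
sums of squares.  The conclusion: `θ ↦ J θ` is Lipschitz with constant
`L_J = m * κ * (1 + L_v) * L_ρ * √2`. -/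
theorem jacobian_lipschitz
    (n₀ n m : ℕ) (κ : ℝ) (hκ : 0 < κ)
    (ρ : ℝ → ℝ) (hρdiff : Differentiable ℝ ρ)
    (Lρ : ℝ) (hLρ : 0 < Lρ)
    (hρlip : ∀ a b : ℝ, |ρ a - ρ b| ≤ Lρ * |a - b|)
    (hρ'lip : ∀ a b : ℝ, |deriv ρ a - deriv ρ b| ≤ Lρ * |a - b|)
    (x : Fin m → Fin n₀ → ℝ)
    (hx : ∀ j : Fin m, Real.sqrt (∑ k, (x j k) ^ 2) ≤ 1)
    (J : (Fin n → Fin n₀ → ℝ) → (Fin n → ℝ) →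
      Matrix (Fin m) ((Fin n × Fin n₀) ⊕ Fin n) ℝ)
    (hJ : ∀ u v, J u v = fun j c =>
      Sum.elim
        (fun ik : Fin n × Fin n₀ =>
          κ * v ik.1 * deriv ρ (∑ k, u ik.1 k * x j k) * x j ik.2)
        (fun i : Fin n => κ * ρ (∑ k, u i k * x j k)) c)
    (ub ut : Fin n → Fin n₀ → ℝ) (vb vt : Fin n → ℝ)
    (Lv : ℝ) (hvb : Real.sqrt (∑ i, (vb i) ^ 2) ≤ Lv) :
    Real.sqrt (∑ j : Fin m, ∑ c : (Fin n × Fin n₀) ⊕ Fin n,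
        (J ub vb j c - J ut vt j c) ^ 2) ≤
      (m : ℝ) * κ * (1 + Lv) * Lρ * Real.sqrt 2 *
        Real.sqrt ((∑ i, ∑ k, (ub i k - ut i k) ^ 2) + ∑ i, (vb i - vt i) ^ 2) := by
  classical
  set Du : ℝ := ∑ i, ∑ k, (ub i k - ut i k) ^ 2 with hDu_def
  set Dv : ℝ := ∑ i, (vb i - vt i) ^ 2 with hDv_def
  have hDu : 0 ≤ Du := Finset.sum_nonneg fun i _ =>
    Finset.sum_nonneg fun k _ => sq_nonneg _
  have hDv : 0 ≤ Dv := Finset.sum_nonneg fun i _ => sq_nonneg _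
  have hLv : 0 ≤ Lv := le_trans (Real.sqrt_nonneg _) hvb
  -- bound on the derivative of ρ
  have hderiv : ∀ t : ℝ, |deriv ρ t| ≤ Lρ := by
    intro t
    have := norm_deriv_le_of_lip' (𝕜 := ℝ) (f := ρ) (x₀ := t) hLρ.le
      (Filter.Eventually.of_forall fun y => by
        simpa [Real.norm_eq_abs] using hρlip y t)
    simpa [Real.norm_eq_abs] using this
  have hderiv2 : ∀ t : ℝ, (deriv ρ t) ^ 2 ≤ Lρ ^ 2 := by
    intro t
    have h := hderiv t
    nlinarith [abs_nonneg (deriv ρ t), sq_abs (deriv ρ t)]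
  -- ‖x j‖² ≤ 1
  have hx2 : ∀ j, ∑ k, (x j k) ^ 2 ≤ 1 := by
    intro j
    have h := hx j
    have h0 : 0 ≤ ∑ k, (x j k) ^ 2 := Finset.sum_nonneg fun k _ => sq_nonneg _
    nlinarith [Real.sq_sqrt h0, Real.sqrt_nonneg (∑ k, (x j k) ^ 2)]
  -- ∑ vb² ≤ Lv²
  have hvb2 : ∑ i, (vb i) ^ 2 ≤ Lv ^ 2 := by
    have h0 : 0 ≤ ∑ i, (vb i) ^ 2 := Finset.sum_nonneg fun i _ => sq_nonneg _
    nlinarith [Real.sq_sqrt h0, Real.sqrt_nonneg (∑ i, (vb i) ^ 2)]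
  -- per-row bound
  have hrow : ∀ j : Fin m, ∑ c : (Fin n × Fin n₀) ⊕ Fin n,
      (J ub vb j c - J ut vt j c) ^ 2 ≤ (κ * (1 + Lv) * Lρ) ^ 2 * 2 * (Du + Dv) := by
    intro j
    set A : Fin n → ℝ := fun i => ∑ k, ub i k * x j k with hA
    set B : Fin n → ℝ := fun i => ∑ k, ut i k * x j k with hB
    set U : Fin n → ℝ := fun i => ∑ k, (ub i k - ut i k) ^ 2 with hU
    have hUnn : ∀ i, 0 ≤ U i := fun i => Finset.sum_nonneg fun k _ => sq_nonneg _
    -- Cauchy-Schwarz: (A i - B i)² ≤ U i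
    have hab : ∀ i, (A i - B i) ^ 2 ≤ U i := by
      intro i
      have he : A i - B i = ∑ k, (ub i k - ut i k) * x j k := by
        simp [hA, hB, sub_mul, Finset.sum_sub_distrib]
      rw [he]
      calc (∑ k, (ub i k - ut i k) * x j k) ^ 2
          ≤ (∑ k, (ub i k - ut i k) ^ 2) * ∑ k, (x j k) ^ 2 :=
            Finset.sum_mul_sq_le_sq_mul_sq _ _ _
        _ ≤ U i := by
            rw [hU]
            exact mul_le_of_le_one_right (Finset.sum_nonneg fun k _ => sq_nonneg _) (hx2 j)
    -- ρ' increments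
    have h1 : ∀ i, (deriv ρ (A i) - deriv ρ (B i)) ^ 2 ≤ Lρ ^ 2 * (A i - B i) ^ 2 := by
      intro i
      have h := hρ'lip (A i) (B i)
      have : (deriv ρ (A i) - deriv ρ (B i)) ^ 2 ≤ (Lρ * |A i - B i|) ^ 2 := by
        rw [← sq_abs (deriv ρ (A i) - deriv ρ (B i))]
        exact pow_le_pow_left₀ (abs_nonneg _) h 2
      calc (deriv ρ (A i) - deriv ρ (B i)) ^ 2 ≤ (Lρ * |A i - B i|) ^ 2 := this
        _ = Lρ ^ 2 * (A i - B i) ^ 2 := by rw [mul_pow, sq_abs]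
    -- the key Δ bound
    have hΔ : ∀ i, (vb i * deriv ρ (A i) - vt i * deriv ρ (B i)) ^ 2 ≤
        2 * Lρ ^ 2 * ((vb i) ^ 2 * U i + (vb i - vt i) ^ 2) := by
      intro i
      have e1 := h1 i
      have e2 := hderiv2 (B i)
      have e3 := hab i
      nlinarith [sq_nonneg (vb i * (deriv ρ (A i) - deriv ρ (B i)) -
          (vb i - vt i) * deriv ρ (B i)),
        mul_le_mul_of_nonneg_left e1 (sq_nonneg (vb i)),
        mul_le_mul_of_nonneg_left e3 (mul_nonneg (sq_nonneg (vb i)) (sq_nonneg Lρ)),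
        mul_le_mul_of_nonneg_left e2 (sq_nonneg (vb i - vt i))]
    -- ρ increments
    have hv : ∀ i, (κ * ρ (A i) - κ * ρ (B i)) ^ 2 ≤ κ ^ 2 * Lρ ^ 2 * U i := by
      intro i
      have h := hρlip (A i) (B i)
      have h2 : (ρ (A i) - ρ (B i)) ^ 2 ≤ Lρ ^ 2 * (A i - B i) ^ 2 := by
        have : (ρ (A i) - ρ (B i)) ^ 2 ≤ (Lρ * |A i - B i|) ^ 2 := by
          rw [← sq_abs (ρ (A i) - ρ (B i))]
          exact pow_le_pow_left₀ (abs_nonneg _) h 2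
        calc (ρ (A i) - ρ (B i)) ^ 2 ≤ (Lρ * |A i - B i|) ^ 2 := this
          _ = Lρ ^ 2 * (A i - B i) ^ 2 := by rw [mul_pow, sq_abs]
      have h3 := hab i
      have h4 := mul_le_mul_of_nonneg_left h2 (sq_nonneg κ)
      have h5 := mul_le_mul_of_nonneg_left h3
        (mul_nonneg (sq_nonneg κ) (sq_nonneg Lρ))
      nlinarith [h4, h5]
    -- split the sum over c
    rw [hJ, hJ]
    simp only
    rw [Fintype.sum_sum_type]
    simp only [Sum.elim_inl, Sum.elim_inr]
    rw [Fintype.sum_prod_type]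
    -- bound the u-block
    have hu : ∀ i, (∑ k, (κ * vb i * deriv ρ (A i) * x j k -
        κ * vt i * deriv ρ (B i) * x j k) ^ 2) ≤
        κ ^ 2 * (vb i * deriv ρ (A i) - vt i * deriv ρ (B i)) ^ 2 := by
      intro i
      have he : ∀ k, (κ * vb i * deriv ρ (A i) * x j k -
          κ * vt i * deriv ρ (B i) * x j k) ^ 2 =
          κ ^ 2 * (vb i * deriv ρ (A i) - vt i * deriv ρ (B i)) ^ 2 * (x j k) ^ 2 := by
        intro k; ring
      rw [Finset.sum_congr rfl fun k _ => he k, ← Finset.mul_sum]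
      exact mul_le_of_le_one_right (by positivity) (hx2 j)
    have husum : (∑ i, ∑ k, (κ * vb i * deriv ρ (A i) * x j k -
        κ * vt i * deriv ρ (B i) * x j k) ^ 2) ≤
        κ ^ 2 * 2 * Lρ ^ 2 * (Lv ^ 2 * Du + Dv) := by
      have step1 : (∑ i, ∑ k, (κ * vb i * deriv ρ (A i) * x j k -
          κ * vt i * deriv ρ (B i) * x j k) ^ 2) ≤
          ∑ i, κ ^ 2 * (2 * Lρ ^ 2 * ((vb i) ^ 2 * U i + (vb i - vt i) ^ 2)) := by
        refine Finset.sum_le_sum fun i _ => le_trans (hu i) ?_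
        exact mul_le_mul_of_nonneg_left (hΔ i) (sq_nonneg κ)
      refine le_trans step1 ?_
      have hbU : ∑ i, (vb i) ^ 2 * U i ≤ Lv ^ 2 * Du := by
        calc ∑ i, (vb i) ^ 2 * U i ≤ ∑ i, (vb i) ^ 2 * Du := by
              refine Finset.sum_le_sum fun i _ => ?_
              refine mul_le_mul_of_nonneg_left ?_ (sq_nonneg _)
              exact Finset.single_le_sum (fun i' _ => hUnn i') (Finset.mem_univ i)
          _ = (∑ i, (vb i) ^ 2) * Du := by rw [Finset.sum_mul]
          _ ≤ Lv ^ 2 * Du := mul_le_mul_of_nonneg_right hvb2 hDu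
      have expand : ∑ i, κ ^ 2 * (2 * Lρ ^ 2 * ((vb i) ^ 2 * U i + (vb i - vt i) ^ 2)) =
          κ ^ 2 * 2 * Lρ ^ 2 * ((∑ i, (vb i) ^ 2 * U i) + Dv) := by
        rw [hDv_def, ← Finset.sum_add_distrib ]
        rw [Finset.mul_sum]
        exact Finset.sum_congr rfl fun i _ => by ring
      rw [expand]
      exact mul_le_mul_of_nonneg_left (by linarith) (by positivity)
    have hvsum : (∑ i, (κ * ρ (A i) - κ * ρ (B i)) ^ 2) ≤ κ ^ 2 * Lρ ^ 2 * Du := by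
      calc ∑ i, (κ * ρ (A i) - κ * ρ (B i)) ^ 2 ≤ ∑ i, κ ^ 2 * Lρ ^ 2 * U i :=
            Finset.sum_le_sum fun i _ => hv i
        _ = κ ^ 2 * Lρ ^ 2 * Du := by rw [← Finset.mul_sum, hDu_def]
    have hfinal : κ ^ 2 * 2 * Lρ ^ 2 * (Lv ^ 2 * Du + Dv) + κ ^ 2 * Lρ ^ 2 * Du ≤
        (κ * (1 + Lv) * Lρ) ^ 2 * 2 * (Du + Dv) := by
      have hcore : 2 * (Lv ^ 2 * Du + Dv) + Du ≤ (1 + Lv) ^ 2 * 2 * (Du + Dv) := by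
        nlinarith [mul_nonneg hLv hDu, mul_nonneg hLv hDv,
          mul_nonneg (mul_nonneg hLv hLv) hDv]
      have := mul_le_mul_of_nonneg_left hcore
        (mul_nonneg (sq_nonneg κ) (sq_nonneg Lρ))
      nlinarith [this]
    linarith [husum, hvsum, hfinal]
  -- sum the row bounds
  set C : ℝ := (κ * (1 + Lv) * Lρ) ^ 2 * 2 * (Du + Dv) with hC
  have hCnn : 0 ≤ C := by positivity
  have hS : ∑ j : Fin m, ∑ c : (Fin n × Fin n₀) ⊕ Fin n,
      (J ub vb j c - J ut vt j c) ^ 2 ≤ (m : ℝ) ^ 2 * C := by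
    calc ∑ j : Fin m, ∑ c : (Fin n × Fin n₀) ⊕ Fin n,
          (J ub vb j c - J ut vt j c) ^ 2 ≤ ∑ _j : Fin m, C :=
          Finset.sum_le_sum fun j _ => hrow j
      _ = (m : ℝ) * C := by simp [Finset.sum_const, mul_comm]
      _ ≤ (m : ℝ) ^ 2 * C := by
          refine mul_le_mul_of_nonneg_right ?_ hCnn
          have : (m : ℝ) * 1 ≤ (m : ℝ) * (m : ℝ) ∨ m = 0 := by
            rcases Nat.eq_zero_or_pos m with h | h
            · right; exact h
            · left
              exact mul_le_mul_of_nonneg_left (by exact_mod_cast h) (Nat.cast_nonneg m)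
          rcases this with h | h
          · nlinarith [h]
          · simp [h]
  -- conclude with square roots
  have hRnn : 0 ≤ (m : ℝ) * κ * (1 + Lv) * Lρ * Real.sqrt 2 * Real.sqrt (Du + Dv) := by
    have h1 : (0 : ℝ) ≤ 1 + Lv := by linarith
    exact mul_nonneg (mul_nonneg (mul_nonneg (mul_nonneg
      (mul_nonneg (Nat.cast_nonneg m) hκ.le) h1) hLρ.le)
      (Real.sqrt_nonneg _)) (Real.sqrt_nonneg _)
  have hRsq : ((m : ℝ) * κ * (1 + Lv) * Lρ * Real.sqrt 2 * Real.sqrt (Du + Dv)) ^ 2 =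
      (m : ℝ) ^ 2 * C := by
    have h2 : Real.sqrt 2 ^ 2 = 2 := Real.sq_sqrt (by norm_num)
    have h3 : Real.sqrt (Du + Dv) ^ 2 = Du + Dv := Real.sq_sqrt (by linarith)
    calc ((m : ℝ) * κ * (1 + Lv) * Lρ * Real.sqrt 2 * Real.sqrt (Du + Dv)) ^ 2
        = ((m : ℝ) ^ 2 * ((κ * (1 + Lv) * Lρ) ^ 2)) * (Real.sqrt 2 ^ 2) *
          (Real.sqrt (Du + Dv) ^ 2) := by ring
      _ = (m : ℝ) ^ 2 * C := by rw [h2, h3, hC]; ring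
  calc Real.sqrt (∑ j : Fin m, ∑ c : (Fin n × Fin n₀) ⊕ Fin n,
        (J ub vb j c - J ut vt j c) ^ 2)
      ≤ Real.sqrt (((m : ℝ) * κ * (1 + Lv) * Lρ * Real.sqrt 2 *
          Real.sqrt (Du + Dv)) ^ 2) := by
        refine Real.sqrt_le_sqrt ?_
        rw [hRsq]; exact hS
    _ = (m : ℝ) * κ * (1 + Lv) * Lρ * Real.sqrt 2 * Real.sqrt (Du + Dv) :=
        Real.sqrt_sq hRnn
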